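/- arXiv:1104.4428 — 2 statements merged into one kernel-verified Lean document; each statement's English description precedes it below -/
import Mathlib

section
/- Let S_λ be a nonzero subnormal weighted shift on the directed tree ℤ₊ with nonzero weights, which admits a normal extension N that is a weighted shift on some directed tree, with N = U ⊕ 0 for U unitary (unitarily equivalent to the bilateral shift). Then S_λ restricted to the closure of its range is an isometry, |λ_n| = 1 for all n ≥ 2, and |λ_1| ≤ 1; hence S_λ is unitarily equivalent to the unilateral weighted shift on ℓ²(ℤ₊) with weight sequence (ϑ, 1, 1, 1, …) for some ϑ ∈ (0,1]. -/
open scoped ENNReal ComplexConjugate Classical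

/-- A directed tree: a connected directed graph with no (directed) circuits in which
every vertex has at most one parent and at most one vertex has no parent (the root). -/
structure DirectedTree (V : Type*) where
  E : V → V → Prop
  parent_unique : ∀ ⦃u₁ u₂ v : V⦄, E u₁ v → E u₂ v → u₁ = u₂
  no_circuit : ∀ v : V, ¬ Relation.TransGen E v v
  connected : ∀ u v : V, Relation.ReflTransGen (fun a b => E a b ∨ E b a) u v
  root_unique : ∀ ⦃r₁ r₂ : V⦄, (∀ u, ¬ E u r₁) → (∀ u, ¬ E u r₂) → r₁ = r₂

namespace DirectedTree

variable {V : Type*} (T : DirectedTree V)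

/-- `v ∈ V°`, i.e. `v` is not a root. -/
def HasParent (v : V) : Prop := ∃ u, T.E u v

/-- The parent partial map (junk value `v` itself at a root). -/
noncomputable def par (v : V) : V := if h : T.HasParent v then h.choose else v

theorem par_spec {v : V} (h : T.HasParent v) : T.E (T.par v) v := by
  rw [par, dif_pos h]; exact h.choose_spec

/-- the child set of a vertex -/
def chi (u : V) : Set V := {v | T.E u v}

/-- the child set of a set of vertices -/
def chiSet (W : Set V) : Set V := {v | ∃ u ∈ W, T.E u v}

/-- the iterated child set `Chi^n(u)` -/
def chiN (n : ℕ) (u : V) : Set V := (T.chiSet)^[n] {u}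

/-- the set of descendants of a vertex -/
def des (u : V) : Set V := ⋃ n : ℕ, T.chiN n u

/-- the iterated parent partial map, as an `Option`-valued map -/
noncomputable def parN : ℕ → V → Option V
  | 0, v => some v
  | n + 1, v => if T.HasParent v then parN n (T.par v) else none

end DirectedTree

/-- the Hilbert space `ℓ²(V)` -/
abbrev l2 (V : Type*) : Type _ := lp (fun _ : V => ℂ) 2

/-- the canonical orthonormal basis vector `e_u` of `ℓ²(V)` -/
noncomputable def evec {V : Type*} (u : V) : l2 V := lp.single 2 u 1

variable {V : Type*}

/-- the formal action `Λ_T` of a weighted shift with weights `lam` -/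
noncomputable def lamMap (T : DirectedTree V) (lam : V → ℂ) (f : V → ℂ) : V → ℂ :=
  fun v => if T.HasParent v then lam v * f (T.par v) else 0

theorem lamMap_add (T : DirectedTree V) (lam : V → ℂ) (f g : V → ℂ) :
    lamMap T lam (f + g) = lamMap T lam f + lamMap T lam g := by
  funext v
  simp only [lamMap, Pi.add_apply]
  split_ifs <;> ring

theorem lamMap_smul (T : DirectedTree V) (lam : V → ℂ) (c : ℂ) (f : V → ℂ) :
    lamMap T lam (c • f) = c • lamMap T lam f := by
  funext v
  simp only [lamMap, Pi.smul_apply, smul_eq_mul]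
  split_ifs <;> ring

/-- the (maximal) domain of the weighted shift `S_lam` -/
noncomputable def shiftDomain (T : DirectedTree V) (lam : V → ℂ) : Submodule ℂ (l2 V) where
  carrier := {f : l2 V | Memℓp (lamMap T lam ⇑f) 2}
  zero_mem' := by
    have : lamMap T lam ⇑(0 : l2 V) = 0 := by
      funext v; simp [lamMap]
    simp only [Set.mem_setOf_eq, this]
    exact zero_memℓp
  add_mem' := by
    intro f g hf hg
    have h : lamMap T lam ⇑(f + g) = lamMap T lam ⇑f + lamMap T lam ⇑g := by
      rw [lp.coeFn_add]; exact lamMap_add T lam _ _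
    simp only [Set.mem_setOf_eq, h]
    exact hf.add hg
  smul_mem' := by
    intro c f hf
    have h : lamMap T lam ⇑(c • f) = c • lamMap T lam ⇑f := by
      rw [lp.coeFn_smul]; exact lamMap_smul T lam _ _
    simp only [Set.mem_setOf_eq, h]
    exact hf.const_smul c

/-- the weighted shift `S_lam` on the directed tree `T`, as an unbounded operator in `ℓ²(V)` -/
noncomputable def shift (T : DirectedTree V) (lam : V → ℂ) : l2 V →ₗ.[ℂ] l2 V where
  domain := shiftDomain T lam
  toFun :=
    { toFun := fun f => ⟨lamMap T lam ⇑(f : l2 V), f.2⟩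
      map_add' := by
        intro f g
        apply Subtype.ext
        exact lamMap_add T lam _ _
      map_smul' := by
        intro c f
        apply Subtype.ext
        exact lamMap_smul T lam _ _ }
/-- A densely defined operator `A` is formally normal if `dom A ⊆ dom A*` and
`‖A* h‖ = ‖A h‖` for all `h ∈ dom A`. -/
def FormallyNormal {H : Type*} [NormedAddCommGroup H] [InnerProductSpace ℂ H]
    [CompleteSpace H] (A : H →ₗ.[ℂ] H) : Prop :=
  Dense (A.domain : Set H) ∧ A.domain ≤ A.adjoint.domain ∧
    ∀ (f : H) (hf : f ∈ A.domain) (hf' : f ∈ A.adjoint.domain),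
      ‖A.adjoint ⟨f, hf'⟩‖ = ‖A ⟨f, hf⟩‖

/-- A densely defined operator `A` is normal if `dom A = dom A*` and
`‖A* h‖ = ‖A h‖` for all `h ∈ dom A` (such an operator is automatically closed). -/
def IsNormalOp {H : Type*} [NormedAddCommGroup H] [InnerProductSpace ℂ H]
    [CompleteSpace H] (A : H →ₗ.[ℂ] H) : Prop :=
  Dense (A.domain : Set H) ∧ A.domain = A.adjoint.domain ∧
    ∀ (f : H) (hf : f ∈ A.domain) (hf' : f ∈ A.adjoint.domain),
      ‖A.adjoint ⟨f, hf'⟩‖ = ‖A ⟨f, hf⟩‖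

/-! The extension `N` is the isometry `U` on `K₀` and vanishes on `K₀ᗮ`, so it is a contraction
with range in `K₀` that is isometric on `K₀`. Through `N ∘ J = J ∘ S_λ`, the isometry `J` maps the
range of `S_λ`, hence its closure, into `K₀`, so `S_λ` is isometric there. As `e_{n+1}` is a
multiple of `S_λ e_n`, this gives `|λ_{n+2}| = ‖S_λ e_{n+1}‖ = 1`, while
`|λ_1| = ‖N J e_0‖ ≤ 1`. With all weights bounded by `1`, `S_λ` is an everywhere defined
contraction, and the diagonal unitary with entries `∏_{k<n} |λ_{k+1}| / λ_{k+1}` turns it into the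
shift with weights `|λ_{n+1}|`, that is `(|λ_1|, 1, 1, …)`. -/

namespace Memℓp

variable {E F : Type*} [NormedAddCommGroup E] [NormedAddCommGroup F] {p : ℝ≥0∞}

theorem of_norm_succ_le (hp : 0 < p.toReal) {f : ℕ → E} {g : ℕ → F} (hg : Memℓp g p)
    (h : ∀ n, ‖f (n + 1)‖ ≤ ‖g n‖) : Memℓp f p := by
  rw [memℓp_gen_iff hp] at hg ⊢
  refine (summable_nat_add_iff 1).mp (hg.of_nonneg_of_le (fun n => by positivity) fun n => ?_)
  gcongr
  exact h n

end Memℓp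

namespace lp

variable {E F : Type*} [NormedAddCommGroup E] [NormedAddCommGroup F] {p : ℝ≥0∞}

theorem norm_le_of_apply_zero_of_norm_succ_le (hp : 0 < p.toReal) {f : lp (fun _ : ℕ => E) p}
    {g : lp (fun _ : ℕ => F) p} (h0 : f 0 = 0) (h : ∀ n, ‖f (n + 1)‖ ≤ ‖g n‖) : ‖f‖ ≤ ‖g‖ := by
  refine norm_le_of_tsum_le hp (norm_nonneg' g) ?_
  have hf := (lp.memℓp f).summable hp
  calc ∑' n, ‖f n‖ ^ p.toReal = ∑' n, ‖f (n + 1)‖ ^ p.toReal := by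
        simp [hf.tsum_eq_zero_add, h0, Real.zero_rpow hp.ne']
    _ ≤ ∑' n, ‖g n‖ ^ p.toReal :=
        ((summable_nat_add_iff 1).mpr hf).tsum_le_tsum (fun n => by gcongr; exact h n)
          ((lp.memℓp g).summable hp)
    _ = ‖g‖ ^ p.toReal := (norm_rpow_eq_tsum hp g).symm

end lp

section DiagonalUnitary

variable {ι : Type*}

theorem memℓp_mul_of_norm_eq_one {c : ι → ℂ} (hc : ∀ i, ‖c i‖ = 1) (f : l2 ι) :
    Memℓp (fun i => c i * f i) 2 :=
  (lp.memℓp f).mono' fun i => by rw [norm_mul, hc, one_mul]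

noncomputable def diagUnitary (c : ι → ℂ) (hc : ∀ i, ‖c i‖ = 1) : l2 ι ≃ₗᵢ[ℂ] l2 ι where
  toFun f := ⟨fun i => c i * f i, memℓp_mul_of_norm_eq_one hc f⟩
  invFun f := ⟨fun i => (c i)⁻¹ * f i, memℓp_mul_of_norm_eq_one (by simp [hc]) f⟩
  map_add' f g := lp.ext <| funext fun i => mul_add _ _ _
  map_smul' a f := lp.ext <| funext fun i => mul_left_comm _ _ _
  left_inv f := lp.ext <| funext fun i => inv_mul_cancel_left₀ (by simp [← norm_ne_zero_iff, hc]) _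
  right_inv f := lp.ext <| funext fun i => mul_inv_cancel_left₀ (by simp [← norm_ne_zero_iff, hc]) _
  norm_map' f := le_antisymm (lp.norm_mono two_ne_zero fun i => by simp [hc])
    (lp.norm_mono two_ne_zero fun i => by simp [hc])

@[simp] theorem diagUnitary_apply (c : ι → ℂ) (hc : ∀ i, ‖c i‖ = 1) (f : l2 ι) (i : ι) :
    diagUnitary c hc f i = c i * f i := rfl

end DiagonalUnitary

namespace ContinuousLinearMap

variable {K : Type*} [NormedAddCommGroup K] [InnerProductSpace ℂ K]
  {K₀ : Submodule ℂ K} {N : K →L[ℂ] K} {U : K₀ →ₗᵢ[ℂ] K₀}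

theorem norm_apply_of_mem (hNU : ∀ x : K₀, N x = U x) {x : K} (hx : x ∈ K₀) :
    ‖N x‖ = ‖x‖ := by
  rw [show x = ((⟨x, hx⟩ : K₀) : K) from rfl, hNU]
  exact U.norm_map _

variable [K₀.HasOrthogonalProjection]

theorem apply_starProjection (hN0 : ∀ y ∈ K₀ᗮ, N y = 0) (x : K) :
    N (K₀.starProjection x) = N x := by
  have h := hN0 _ (K₀.sub_starProjection_mem_orthogonal x)
  rwa [map_sub, sub_eq_zero, eq_comm] at h

theorem apply_mem (hNU : ∀ x : K₀, N x = U x) (hN0 : ∀ y ∈ K₀ᗮ, N y = 0) (x : K) :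
    N x ∈ K₀ := by
  rw [← apply_starProjection hN0, hNU ⟨_, K₀.starProjection_apply_mem x⟩]
  exact (U _).2

theorem norm_apply_le (hNU : ∀ x : K₀, N x = U x) (hN0 : ∀ y ∈ K₀ᗮ, N y = 0) (x : K) :
    ‖N x‖ ≤ ‖x‖ := by
  rw [← apply_starProjection hN0, norm_apply_of_mem hNU (K₀.starProjection_apply_mem x)]
  exact K₀.norm_starProjection_apply_le x

end ContinuousLinearMap

theorem norm_evec {V : Type*} (v : V) : ‖evec v‖ = 1 := by
  rw [evec, lp.norm_single (by norm_num), norm_one]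

section ShiftOnNat

variable {T : DirectedTree ℕ}

theorem lamMap_zero (hE : ∀ a b : ℕ, T.E a b ↔ b = a + 1) (lam f : ℕ → ℂ) :
    lamMap T lam f 0 = 0 := by
  have h0 : ¬ T.HasParent 0 := fun ⟨u, hu⟩ => by rw [hE] at hu; omega
  simp [lamMap, h0]

theorem lamMap_succ (hE : ∀ a b : ℕ, T.E a b ↔ b = a + 1) (lam f : ℕ → ℂ) (n : ℕ) :
    lamMap T lam f (n + 1) = lam (n + 1) * f n := by
  have hp : T.HasParent (n + 1) := ⟨n, (hE n (n + 1)).2 rfl⟩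
  have hpar : T.par (n + 1) = n := by
    have h := T.par_spec hp
    rw [hE] at h
    omega
  simp [lamMap, hp, hpar]

theorem lamMap_evec (hE : ∀ a b : ℕ, T.E a b ↔ b = a + 1) (lam : ℕ → ℂ) (n : ℕ) :
    lamMap T lam (evec n) = ⇑(lam (n + 1) • evec (n + 1) : l2 ℕ) := by
  funext m
  cases m with
  | zero => simp [lamMap_zero hE, evec, lp.single_apply]
  | succ m => by_cases h : m = n <;> simp [lamMap_succ hE, evec, lp.single_apply, h]

theorem evec_mem_shift_domain (hE : ∀ a b : ℕ, T.E a b ↔ b = a + 1) (lam : ℕ → ℂ) (n : ℕ) :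
    evec n ∈ (shift T lam).domain := by
  show Memℓp (lamMap T lam (evec n)) 2
  rw [lamMap_evec hE]
  exact lp.memℓp _

theorem shift_evec (hE : ∀ a b : ℕ, T.E a b ↔ b = a + 1) (lam : ℕ → ℂ) (n : ℕ) :
    shift T lam ⟨evec n, evec_mem_shift_domain hE lam n⟩ = lam (n + 1) • evec (n + 1) :=
  lp.ext (lamMap_evec hE lam n)

theorem norm_shift_evec (hE : ∀ a b : ℕ, T.E a b ↔ b = a + 1) (lam : ℕ → ℂ) (n : ℕ) :
    ‖shift T lam ⟨evec n, evec_mem_shift_domain hE lam n⟩‖ = ‖lam (n + 1)‖ := by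
  rw [shift_evec hE, norm_smul, norm_evec, mul_one]

theorem evec_succ_mem_range_shift (hE : ∀ a b : ℕ, T.E a b ↔ b = a + 1) {lam : ℕ → ℂ} {n : ℕ}
    (hn : lam (n + 1) ≠ 0) :
    evec (n + 1) ∈ Set.range fun g : (shift T lam).domain => (shift T lam g : l2 ℕ) :=
  ⟨(lam (n + 1))⁻¹ • ⟨evec n, evec_mem_shift_domain hE lam n⟩, by
    dsimp only
    rw [LinearPMap.map_smul, shift_evec hE, smul_smul, inv_mul_cancel₀ hn, one_smul]⟩

variable {lam : ℕ → ℂ}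

theorem shift_domain_eq_top (hE : ∀ a b : ℕ, T.E a b ↔ b = a + 1)
    (hw : ∀ n, ‖lam (n + 1)‖ ≤ 1) : (shift T lam).domain = ⊤ :=
  eq_top_iff.2 fun f _ => (lp.memℓp f).of_norm_succ_le (by norm_num) fun n => by
    rw [lamMap_succ hE, norm_mul]
    exact mul_le_of_le_one_left (norm_nonneg _) (hw n)

theorem norm_shift_le (hE : ∀ a b : ℕ, T.E a b ↔ b = a + 1) (hw : ∀ n, ‖lam (n + 1)‖ ≤ 1)
    (f : (shift T lam).domain) : ‖shift T lam f‖ ≤ ‖(f : l2 ℕ)‖ :=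
  lp.norm_le_of_apply_zero_of_norm_succ_le (by norm_num) (lamMap_zero hE lam _) fun n => by
    show ‖lamMap T lam _ (n + 1)‖ ≤ _
    rw [lamMap_succ hE, norm_mul]
    exact mul_le_of_le_one_left (norm_nonneg _) (hw n)

noncomputable def boundedShift (hE : ∀ a b : ℕ, T.E a b ↔ b = a + 1)
    (hw : ∀ n, ‖lam (n + 1)‖ ≤ 1) : l2 ℕ →L[ℂ] l2 ℕ :=
  LinearMap.mkContinuous
    ((shift T lam).toFun ∘ₗ (LinearEquiv.ofTop _ (shift_domain_eq_top hE hw)).symm.toLinearMap) 1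
    fun _ => (norm_shift_le hE hw _).trans_eq (one_mul _).symm

theorem boundedShift_apply (hE : ∀ a b : ℕ, T.E a b ↔ b = a + 1) (hw : ∀ n, ‖lam (n + 1)‖ ≤ 1)
    (f : (shift T lam).domain) : boundedShift hE hw f = shift T lam f :=
  rfl

theorem coe_boundedShift (hE : ∀ a b : ℕ, T.E a b ↔ b = a + 1) (hw : ∀ n, ‖lam (n + 1)‖ ≤ 1)
    (f : l2 ℕ) : ⇑(boundedShift hE hw f) = lamMap T lam f :=
  rfl

end ShiftOnNat

section Phase

variable {lam : ℕ → ℂ}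

noncomputable def phase (lam : ℕ → ℂ) (n : ℕ) : ℂ :=
  ∏ k ∈ Finset.range n, (‖lam (k + 1)‖ : ℂ) / lam (k + 1)

theorem norm_phase (hlam : ∀ n, lam (n + 1) ≠ 0) (n : ℕ) : ‖phase lam n‖ = 1 := by
  rw [phase, norm_prod]
  refine Finset.prod_eq_one fun k _ => ?_
  rw [norm_div, Complex.norm_real, norm_norm, div_self (norm_ne_zero_iff.2 (hlam k))]

theorem phase_succ_mul (hlam : ∀ n, lam (n + 1) ≠ 0) (n : ℕ) :
    phase lam (n + 1) * lam (n + 1) = ‖lam (n + 1)‖ * phase lam n := by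
  rw [phase, Finset.prod_range_succ, ← phase, mul_assoc, div_mul_cancel₀ _ (hlam n), mul_comm]

end Phase

theorem diagUnitary_phase_boundedShift {T : DirectedTree ℕ} {lam : ℕ → ℂ}
    (hE : ∀ a b : ℕ, T.E a b ↔ b = a + 1) (hlam : ∀ n, lam (n + 1) ≠ 0)
    (hw : ∀ n, ‖lam (n + 1)‖ ≤ 1) (f : l2 ℕ) :
    diagUnitary (phase lam) (norm_phase hlam) (boundedShift hE hw f) 0 = 0 ∧
      ∀ n, diagUnitary (phase lam) (norm_phase hlam) (boundedShift hE hw f) (n + 1) =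
        ‖lam (n + 1)‖ * diagUnitary (phase lam) (norm_phase hlam) f n := by
  simp only [diagUnitary_apply, coe_boundedShift, lamMap_zero hE, lamMap_succ hE, mul_zero,
    true_and]
  intro n
  rw [← mul_assoc, phase_succ_mul hlam, mul_assoc]

section NormalExtension

variable {H K : Type*} [NormedAddCommGroup H] [InnerProductSpace ℂ H]
  [NormedAddCommGroup K] [InnerProductSpace ℂ K] {A : H →ₗ.[ℂ] H} {J : H →ₗᵢ[ℂ] K}
  {N : K →L[ℂ] K} {K₀ : Submodule ℂ K} [K₀.HasOrthogonalProjection] {U : K₀ →ₗᵢ[ℂ] K₀}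

theorem norm_apply_eq_of_mem_closure_range (hext : ∀ f : A.domain, N (J f) = J (A f))
    (hNU : ∀ x : K₀, N x = U x) (hN0 : ∀ y ∈ K₀ᗮ, N y = 0) (hK₀ : IsClosed (K₀ : Set K))
    (f : A.domain) (hf : (f : H) ∈ closure (Set.range fun g : A.domain => A g)) :
    ‖A f‖ = ‖(f : H)‖ := by
  have hrange : Set.MapsTo J (Set.range fun g : A.domain => A g) K₀ := by
    rintro _ ⟨g, rfl⟩
    rw [← hext]
    exact N.apply_mem hNU hN0 _
  have hJf : J f ∈ (K₀ : Set K) := hK₀.closure_eq ▸ map_mem_closure J.continuous hf hrange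
  rw [← J.norm_map, ← hext, N.norm_apply_of_mem hNU hJf, J.norm_map]

end NormalExtension

theorem subnormal_shift_on_nat_structure_general
    {K : Type*} [NormedAddCommGroup K] [InnerProductSpace ℂ K] [CompleteSpace K]
    (T : DirectedTree ℕ) (hE : ∀ a b : ℕ, T.E a b ↔ b = a + 1)
    (lam : ℕ → ℂ) (hlam : ∀ n : ℕ, 1 ≤ n → lam n ≠ 0)
    (J : l2 ℕ →ₗᵢ[ℂ] K) (N : K →L[ℂ] K)
    (hext : ∀ f : (shift T lam).domain, N (J (f : l2 ℕ)) = J (shift T lam f))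
    (K₀ : Submodule ℂ K) (hK₀ : IsClosed (K₀ : Set K))
    (U : K₀ ≃ₗᵢ[ℂ] K₀)
    (hNU : ∀ x : K₀, N (x : K) = ((U x : K₀) : K))
    (hN0 : ∀ y ∈ K₀ᗮ, N y = 0) :
    (∀ f : (shift T lam).domain,
      (f : l2 ℕ) ∈ closure (Set.range fun g : (shift T lam).domain =>
          (shift T lam g : l2 ℕ)) →
        ‖shift T lam f‖ = ‖(f : l2 ℕ)‖) ∧
    (∀ n : ℕ, 2 ≤ n → ‖lam n‖ = 1) ∧
    ‖lam 1‖ ≤ 1 ∧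
    ∃ ϑ : ℝ, 0 < ϑ ∧ ϑ ≤ 1 ∧
      (shift T lam).domain = ⊤ ∧
      ∃ Sb : l2 ℕ →L[ℂ] l2 ℕ,
        (∀ f : (shift T lam).domain, Sb (f : l2 ℕ) = shift T lam f) ∧
        ∃ Wu : l2 ℕ ≃ₗᵢ[ℂ] l2 ℕ,
          ∀ f : l2 ℕ,
            (Wu (Sb f) : ℕ → ℂ) 0 = 0 ∧
            ∀ n : ℕ, (Wu (Sb f) : ℕ → ℂ) (n + 1) =
              (if n = 0 then (ϑ : ℂ) else 1) * (Wu f : ℕ → ℂ) n := by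
  have : CompleteSpace K₀ := hK₀.completeSpace_coe
  have hlam' : ∀ n, lam (n + 1) ≠ 0 := fun n => hlam (n + 1) (Nat.le_add_left 1 n)
  have hiso := norm_apply_eq_of_mem_closure_range (U := U.toLinearIsometry) hext hNU hN0 hK₀
  have hlam_ge_two : ∀ n, 2 ≤ n → ‖lam n‖ = 1 := by
    intro n hn
    obtain ⟨m, rfl⟩ := Nat.exists_eq_add_of_le' hn
    rw [← norm_shift_evec hE lam (m + 1),
      hiso _ (subset_closure (evec_succ_mem_range_shift hE (hlam' m))), norm_evec]
  have hlam_one : ‖lam 1‖ ≤ 1 := by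
    rw [← norm_shift_evec hE lam 0, ← J.norm_map, ← hext, ← norm_evec 0, ← J.norm_map]
    exact N.norm_apply_le (U := U.toLinearIsometry) hNU hN0 _
  have hw : ∀ n, ‖lam (n + 1)‖ ≤ 1
    | 0 => hlam_one
    | n + 1 => (hlam_ge_two (n + 2) le_add_self).le
  refine ⟨hiso, hlam_ge_two, hlam_one, ‖lam 1‖, norm_pos_iff.2 (hlam' 0), hlam_one,
    shift_domain_eq_top hE hw, boundedShift hE hw, boundedShift_apply hE hw,
    diagUnitary (phase lam) (norm_phase hlam'), fun f => ?_⟩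
  refine (diagUnitary_phase_boundedShift hE hlam' hw f).imp_right fun h n => ?_
  rcases n with _ | n
  · simp [h]
  · simp [h, hlam_ge_two (n + 2) le_add_self]

/-- a nonzero subnormal weighted shift on `ℤ₊` with nonzero weights whose
normal extension is `U ⊕ 0` with `U` unitarily equivalent to the bilateral shift is,
after restriction to the closure of its range, an isometry; `|λ_n| = 1` for `n ≥ 2`,
`|λ_1| ≤ 1`, and `S_λ` is unitarily equivalent to the unilateral weighted shift with
weights `(ϑ, 1, 1, …)`, `ϑ ∈ (0,1]`. -/
theorem subnormal_shift_on_nat_structure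
    {K : Type*} [NormedAddCommGroup K] [InnerProductSpace ℂ K] [CompleteSpace K]
    (T : DirectedTree ℕ) (hE : ∀ a b : ℕ, T.E a b ↔ b = a + 1)
    (lam : ℕ → ℂ) (hlam : ∀ n : ℕ, 1 ≤ n → lam n ≠ 0)
    (hnz : ∃ f : (shift T lam).domain, shift T lam f ≠ 0)
    (J : l2 ℕ →ₗᵢ[ℂ] K) (N : K →L[ℂ] K) (hNnormal : IsStarNormal N)
    (hext : ∀ f : (shift T lam).domain, N (J (f : l2 ℕ)) = J (shift T lam f))
    (K₀ : Submodule ℂ K) (hK₀ : IsClosed (K₀ : Set K))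
    (U : K₀ ≃ₗᵢ[ℂ] K₀)
    (hNU : ∀ x : K₀, N (x : K) = ((U x : K₀) : K))
    (hN0 : ∀ y ∈ K₀ᗮ, N y = 0)
    (hbil : ∃ Wiso : K₀ ≃ₗᵢ[ℂ] l2 ℤ,
      ∀ (x : K₀) (n : ℤ), (Wiso (U x) : ℤ → ℂ) n = (Wiso x : ℤ → ℂ) (n - 1)) :
    (∀ f : (shift T lam).domain,
      (f : l2 ℕ) ∈ closure (Set.range fun g : (shift T lam).domain =>
          (shift T lam g : l2 ℕ)) →
        ‖shift T lam f‖ = ‖(f : l2 ℕ)‖) ∧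
    (∀ n : ℕ, 2 ≤ n → ‖lam n‖ = 1) ∧
    ‖lam 1‖ ≤ 1 ∧
    ∃ ϑ : ℝ, 0 < ϑ ∧ ϑ ≤ 1 ∧
      (shift T lam).domain = ⊤ ∧
      ∃ Sb : l2 ℕ →L[ℂ] l2 ℕ,
        (∀ f : (shift T lam).domain, Sb (f : l2 ℕ) = shift T lam f) ∧
        ∃ Wu : l2 ℕ ≃ₗᵢ[ℂ] l2 ℕ,
          ∀ f : l2 ℕ,
            (Wu (Sb f) : ℕ → ℂ) 0 = 0 ∧
            ∀ n : ℕ, (Wu (Sb f) : ℕ → ℂ) (n + 1) =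
              (if n = 0 then (ϑ : ℂ) else 1) * (Wu f : ℕ → ℂ) n :=
  subnormal_shift_on_nat_structure_general T hE lam hlam J N hext K₀ hK₀ U hNU hN0
end

section
/- Let T̂ = (V̂, Ê) be the directed tree with V̂ = {ω} ∪ ℤ (ω ∉ ℤ) and Ê = {(0,ω)} ∪ {(n,n+1) : n ∈ ℤ}, and let N be the weighted shift on T̂ with weights λ̂_ω = 0 and λ̂_n = 1 for n ∈ ℤ. Fix ϑ ∈ (0,1] and define ẽ_0 = √(1−ϑ²)·ê_ω + ϑ·ê_0 and ẽ_n = ê_n for n ≥ 1, and let H be the closed linear span of {ẽ_n}_{n≥0}. Then N is a bounded normal operator, {ẽ_n}_{n≥0} is an orthonormal system, N(H) ⊆ H, N ẽ_0 = ϑ ẽ_1, N ẽ_n = ẽ_{n+1} for n ≥ 1, and N|_H is unitarily equivalent to the unilateral weighted shift on ℓ²(ℤ₊) with weights (ϑ, 1, 1, 1, …). In particular, this weighted shift with weights (ϑ,1,1,…) is subnormal with a normal extension that is a weighted shift on a directed tree. -/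
open scoped ENNReal ComplexConjugate Classical

variable {V : Type*}

/-!
Identify `V̂` with `Option ℤ`, the leaf `ω` being `none`. Then `(N f) ω = 0` and
`(N f) n = f (n - 1)`: `N` pulls the `ℤ`-coordinates back along the bijection `n ↦ n - 1` and
kills the `ω`-coordinate. Its adjoint does the same with `n ↦ n + 1`, and both `N* N` and `N N*`
are the projection killing `ω`, so `N` is normal.

The vector `ẽ₀` is a unit vector in the plane of `ê_ω, ê₀`, orthogonal to every `ê_n`, `n ≥ 1`,
so `(ẽ_n)` is orthonormal, and `N ẽ_n = w_n ẽ_{n+1}` with `w = (ϑ, 1, 1, …)`. Hence the closed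
span `H` of the `ẽ_n` is invariant and `(ẽ_n)` is a Hilbert basis of `H`; for `x ∈ H`, the
coordinates of `N x` in that basis are the `w`-weighted shift of those of `x`, because both sides
are continuous linear functionals of `x` that agree on the basis vectors.
-/
section HilbertBasis

open Submodule

variable {𝕜 E ι : Type*} [RCLike 𝕜] [NormedAddCommGroup E]

theorem mem_topologicalClosure_span_range [NormedSpace 𝕜 E] (v : ι → E) (i : ι) :
    v i ∈ (span 𝕜 (Set.range v)).topologicalClosure :=
  le_topologicalClosure _ (subset_span (Set.mem_range_self i))

theorem topologicalClosure_span_range_lift_eq_top [NormedSpace 𝕜 E] (v : ι → E) :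
    (span 𝕜 (Set.range fun i => (⟨v i, mem_topologicalClosure_span_range v i⟩ :
      (span 𝕜 (Set.range v)).topologicalClosure))).topologicalClosure = ⊤ := by
  set K := (span 𝕜 (Set.range v)).topologicalClosure
  have himage : Subtype.val '' (span 𝕜 (Set.range fun i =>
      (⟨v i, mem_topologicalClosure_span_range v i⟩ : K)) : Set K) = span 𝕜 (Set.range v) := by
    rw [← K.coe_subtype, ← map_coe, map_span, ← Set.range_comp]
    rfl
  refine eq_top_iff.2 fun x _ => ?_
  rw [← SetLike.mem_coe, topologicalClosure_coe, closure_subtype, himage]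
  exact x.2

variable [InnerProductSpace 𝕜 E] [CompleteSpace E]

noncomputable def Orthonormal.hilbertBasisClosure {v : ι → E} (hv : Orthonormal 𝕜 v) :
    HilbertBasis ι 𝕜 (span 𝕜 (Set.range v)).topologicalClosure :=
  HilbertBasis.mk (v := fun i => ⟨v i, mem_topologicalClosure_span_range v i⟩)
    ((span 𝕜 (Set.range v)).topologicalClosure.subtypeₗᵢ.orthonormal_comp_iff.mp hv)
    (topologicalClosure_span_range_lift_eq_top v).ge

@[simp]
theorem Orthonormal.coe_hilbertBasisClosure_apply {v : ι → E}
    (hv : Orthonormal 𝕜 v) (i : ι) : (hv.hilbertBasisClosure i : E) = v i := by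
  simp [Orthonormal.hilbertBasisClosure]

end HilbertBasis

section WeightedShift

variable {𝕜 E : Type*} [RCLike 𝕜] [NormedAddCommGroup E] [InnerProductSpace 𝕜 E]
  {A : E →L[𝕜] E} {w : ℕ → 𝕜}

theorem HilbertBasis.repr_apply_zero_of_shift (b : HilbertBasis ℕ 𝕜 E)
    (hA : ∀ n, A (b n) = w n • b (n + 1)) (x : E) : b.repr (A x) 0 = 0 := by
  have : (innerSL 𝕜 (b 0)).comp A = 0 := by
    refine ContinuousLinearMap.ext_on
      (Submodule.dense_iff_topologicalClosure_eq_top.2 b.dense_span) ?_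
    rintro - ⟨k, rfl⟩
    simp [hA, b.orthonormal.inner_eq_zero (Nat.succ_ne_zero k).symm]
  simpa [b.repr_apply_apply] using congr($this x)

theorem HilbertBasis.repr_apply_succ_of_shift (b : HilbertBasis ℕ 𝕜 E)
    (hA : ∀ n, A (b n) = w n • b (n + 1)) (x : E) (n : ℕ) :
    b.repr (A x) (n + 1) = w n * b.repr x n := by
  have : (innerSL 𝕜 (b (n + 1))).comp A = w n • innerSL 𝕜 (b n) := by
    refine ContinuousLinearMap.ext_on
      (Submodule.dense_iff_topologicalClosure_eq_top.2 b.dense_span) ?_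
    rintro - ⟨k, rfl⟩
    rcases eq_or_ne n k with rfl | hnk
    · simp [hA, b.orthonormal.1]
    · simp [hA, b.orthonormal.inner_eq_zero hnk,
        b.orthonormal.inner_eq_zero (by omega : n + 1 ≠ k + 1)]
  simpa [b.repr_apply_apply] using congr($this x)

variable [CompleteSpace E]

theorem Orthonormal.exists_linearIsometryEquiv_weightedShift {v : ℕ → E} (hv : Orthonormal 𝕜 v)
    (hA : ∀ n, A (v n) = w n • v (n + 1)) :
    (∀ x ∈ (Submodule.span 𝕜 (Set.range v)).topologicalClosure,
      A x ∈ (Submodule.span 𝕜 (Set.range v)).topologicalClosure) ∧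
    ∃ U : (Submodule.span 𝕜 (Set.range v)).topologicalClosure ≃ₗᵢ[𝕜] lp (fun _ : ℕ => 𝕜) 2,
      ∀ (x : (Submodule.span 𝕜 (Set.range v)).topologicalClosure)
        (hx : A (x : E) ∈ (Submodule.span 𝕜 (Set.range v)).topologicalClosure),
        (U ⟨A x, hx⟩ : ℕ → 𝕜) 0 = 0 ∧
          ∀ n, (U ⟨A x, hx⟩ : ℕ → 𝕜) (n + 1) = w n * (U x : ℕ → 𝕜) n := by
  have hspan : Submodule.span 𝕜 (Set.range v) ∈ Module.End.invtSubmodule (A : E →ₗ[𝕜] E) := by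
    rw [Module.End.mem_invtSubmodule, Submodule.span_le]
    rintro - ⟨n, rfl⟩
    simpa [hA] using
      Submodule.smul_mem _ (w n) (Submodule.subset_span (Set.mem_range_self (n + 1)))
  have hinv := Submodule.topologicalClosure_mem_invtSubmodule hspan
  rw [Module.End.mem_invtSubmodule_iff_forall_mem_of_mem] at hinv
  let b := hv.hilbertBasisClosure
  have hb : ∀ n, A.restrict hinv (b n) = w n • b (n + 1) := fun n =>
    Subtype.ext (by simp [b, hA])
  exact ⟨hinv, b.repr, fun x hx =>
    ⟨b.repr_apply_zero_of_shift hb x, b.repr_apply_succ_of_shift hb x⟩⟩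

end WeightedShift

theorem Orthonormal.update {𝕜 E ι : Type*} [RCLike 𝕜] [NormedAddCommGroup E]
    [InnerProductSpace 𝕜 E] [DecidableEq ι] {v : ι → E} (hv : Orthonormal 𝕜 v) (i : ι) {x : E}
    (hx : ‖x‖ = 1) (hxv : ∀ j ≠ i, inner 𝕜 x (v j) = 0) :
    Orthonormal 𝕜 (Function.update v i x) := by
  refine ⟨fun j => ?_, fun j k hjk => ?_⟩
  · rcases eq_or_ne j i with rfl | hj
    · simpa using hx
    · simpa [hj] using hv.1 j
  · rcases eq_or_ne j i with rfl | hj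
    · simpa [Ne.symm hjk] using hxv k (Ne.symm hjk)
    rcases eq_or_ne k i with rfl | hk
    · simpa [hj] using congr(conj $(hxv j hj))
    · simpa [hj, hk] using hv.2 hjk

theorem evec_apply (u v : V) : evec u v = if v = u then 1 else 0 := by
  simp [evec, lp.single_apply, Pi.single_apply]

theorem inner_evec_left (u : V) (f : l2 V) : inner ℂ (evec u) f = f u := by
  simp [evec, lp.inner_single_left]

theorem orthonormal_evec : Orthonormal ℂ (evec : V → l2 V) := by
  rw [orthonormal_iff_ite]
  intro u v
  simp [inner_evec_left, evec_apply]

theorem norm_sq_smul_evec_add_smul_evec {a b : V} (hab : a ≠ b) (c d : ℂ) :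
    ‖c • evec a + d • evec b‖ ^ 2 = ‖c‖ ^ 2 + ‖d‖ ^ 2 := by
  rw [@norm_add_sq ℂ, norm_smul, norm_smul, orthonormal_evec.1, orthonormal_evec.1]
  simp [inner_smul_left, inner_smul_right, inner_evec_left, evec_apply, hab]

theorem inner_smul_evec_add_smul_evec_evec {a b u : V} (ha : u ≠ a) (hb : u ≠ b) (c d : ℂ) :
    inner ℂ (c • evec a + d • evec b) (evec u) = 0 := by
  simp [inner_evec_left, evec_apply, ha.symm, hb.symm]

theorem orthonormal_of_eq_smul_evec_add_smul_evec {e : ℕ → l2 (Option ℤ)} {c d : ℂ}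
    (hcd : ‖c‖ ^ 2 + ‖d‖ ^ 2 = 1) (h0 : e 0 = c • evec none + d • evec (some 0))
    (hn : ∀ n : ℕ, 1 ≤ n → e n = evec (some (n : ℤ))) : Orthonormal ℂ e := by
  have he : e = Function.update (fun n : ℕ => evec (some (n : ℤ))) 0 (e 0) := by
    funext n
    cases n with
    | zero => simp
    | succ n => simp [hn]
  have hnorm : ‖e 0‖ = 1 := by
    rw [← pow_eq_one_iff_of_nonneg (norm_nonneg _) two_ne_zero, h0,
      norm_sq_smul_evec_add_smul_evec (by simp), hcd]
  rw [he]
  refine (orthonormal_evec.comp _ fun m n h => by simpa using h).update 0 hnorm fun j hj => ?_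
  rw [h0]
  exact inner_smul_evec_add_smul_evec_evec (by simp) (by simpa using hj) _ _

section OptionComp

variable {W : Type*}

theorem tsum_option_of_none_eq_zero {α : Type*} [AddCommMonoid α] [TopologicalSpace α]
    {g : Option W → α} (hg : g none = 0) : ∑' v, g v = ∑' w, g (some w) :=
  ((Option.some_injective W).tsum_eq fun v hv => by
    cases v with
    | none => exact absurd hg hv
    | some w => exact ⟨w, rfl⟩).symm

def optionCompFun (σ : W ≃ W) (f : Option W → ℂ) : Option W → ℂ :=
  fun v => v.elim 0 fun w => f (some (σ w))

variable (σ : W ≃ W)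

theorem norm_rpow_optionCompFun {f : Option W → ℂ} {r : ℝ} (hr : 0 < r) (v : Option W) :
    ‖optionCompFun σ f v‖ ^ r = v.elim 0 fun w => ‖f (some (σ w))‖ ^ r := by
  cases v <;> simp [optionCompFun, Real.zero_rpow hr.ne']

theorem memℓp_optionCompFun {f : Option W → ℂ} (hf : Memℓp f 2) :
    Memℓp (optionCompFun σ f) 2 := by
  have hp : 0 < (2 : ℝ≥0∞).toReal := by norm_num
  refine memℓp_gen ?_
  simp_rw [norm_rpow_optionCompFun σ hp]
  refine ((Option.some_injective W).summable_iff fun v hv => ?_).1 ?_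
  · cases v with
    | none => rfl
    | some w => exact absurd ⟨w, rfl⟩ hv
  · exact (hf.summable hp).comp_injective ((Option.some_injective W).comp σ.injective)

theorem norm_optionCompFun_le (f : l2 (Option W)) :
    ‖(⟨optionCompFun σ f, memℓp_optionCompFun σ f.2⟩ : l2 (Option W))‖ ≤ ‖f‖ := by
  have hp : 0 < (2 : ℝ≥0∞).toReal := by norm_num
  refine lp.norm_le_of_tsum_le hp (norm_nonneg f) ?_
  rw [lp.norm_rpow_eq_tsum hp f]
  calc ∑' v, ‖optionCompFun σ f v‖ ^ (2 : ℝ≥0∞).toReal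
      = ∑' w, ‖f (some (σ w))‖ ^ (2 : ℝ≥0∞).toReal := by
        simp_rw [norm_rpow_optionCompFun σ hp]
        exact tsum_option_of_none_eq_zero rfl
    _ = ∑' w, ‖f (some w)‖ ^ (2 : ℝ≥0∞).toReal :=
        σ.tsum_eq fun w => ‖f (some w)‖ ^ (2 : ℝ≥0∞).toReal
    _ ≤ ∑' v, ‖f v‖ ^ (2 : ℝ≥0∞).toReal :=
        tsum_comp_le_tsum_of_inj ((lp.memℓp f).summable hp) (fun _ => by positivity)
          (Option.some_injective W)

noncomputable def optionComp : l2 (Option W) →L[ℂ] l2 (Option W) :=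
  LinearMap.mkContinuous
    { toFun f := ⟨optionCompFun σ f, memℓp_optionCompFun σ f.2⟩
      map_add' f g := by
        ext v
        cases v
        · exact (add_zero 0).symm
        · rfl
      map_smul' c f := by ext v; cases v <;> simp [optionCompFun] }
    1 fun f => (one_mul ‖f‖).symm ▸ norm_optionCompFun_le σ f

@[simp]
theorem coe_optionComp (f : l2 (Option W)) : ⇑(optionComp σ f) = optionCompFun σ f := rfl

theorem optionComp_comp (τ : W ≃ W) :
    optionComp σ ∘L optionComp τ = optionComp (σ.trans τ) := by
  ext f v
  cases v <;> rfl

theorem adjoint_optionComp : (optionComp σ).adjoint = optionComp σ.symm := by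
  refine ((ContinuousLinearMap.eq_adjoint_iff _ _).2 fun x y => ?_).symm
  simp only [lp.inner_eq_tsum, coe_optionComp]
  rw [tsum_option_of_none_eq_zero (by simp [optionCompFun]),
    tsum_option_of_none_eq_zero (by simp [optionCompFun])]
  rw [← σ.tsum_eq]
  simp [optionCompFun]

theorem isStarNormal_optionComp : IsStarNormal (optionComp σ) := by
  refine ⟨?_⟩
  rw [ContinuousLinearMap.star_eq_adjoint, adjoint_optionComp, commute_iff_eq,
    ContinuousLinearMap.mul_def, ContinuousLinearMap.mul_def, optionComp_comp, optionComp_comp,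
    Equiv.symm_trans_self, Equiv.self_trans_symm]

theorem optionComp_evec_none : optionComp σ (evec none) = 0 := by
  ext v
  cases v <;> simp [optionCompFun, evec, lp.single_apply]

theorem optionComp_evec_some (w : W) :
    optionComp σ (evec (some w)) = evec (some (σ.symm w)) := by
  ext v
  cases v <;> simp [optionCompFun, evec, lp.single_apply, Pi.single_apply, Equiv.eq_symm_apply]

end OptionComp

theorem lamMap_eq_optionCompFun {W : Type*} {T : DirectedTree (Option W)} (σ : W ≃ W)
    (hpar : ∀ w, T.E (some (σ w)) (some w)) {lam : Option W → ℂ} (hω : lam none = 0)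
    (h1 : ∀ w, lam (some w) = 1) : lamMap T lam = optionCompFun σ := by
  funext f v
  cases v with
  | none => simp [lamMap, optionCompFun, hω]
  | some w =>
    have hp : T.HasParent (some w) := ⟨_, hpar w⟩
    simp [lamMap, optionCompFun, hp, h1, T.parent_unique (T.par_spec hp) (hpar w)]

/-- the weighted shift `N` on the tree `ℤ` with a leaf `ω` glued at `0`
(weight `0` at `ω`, weights `1` on `ℤ`) is a bounded normal operator which, restricted to
the closed span of the vectors `ẽ_n`, is unitarily equivalent to the unilateral weighted
shift with weights `(ϑ, 1, 1, …)`. -/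
theorem model_normal_extension (ϑ : ℝ) (hϑ : ϑ ∈ Set.Ioc (0 : ℝ) 1)
    (That : DirectedTree (Option ℤ))
    (hE : ∀ a b : Option ℤ, That.E a b ↔
      (a = some 0 ∧ b = none) ∨ ∃ n : ℤ, a = some n ∧ b = some (n + 1))
    (lamHat : Option ℤ → ℂ)
    (hω : lamHat none = 0) (h1 : ∀ n : ℤ, lamHat (some n) = 1) :
    (shift That lamHat).domain = ⊤ ∧
    ∃ N : l2 (Option ℤ) →L[ℂ] l2 (Option ℤ),
      (∀ g : (shift That lamHat).domain,
        N (g : l2 (Option ℤ)) = shift That lamHat g) ∧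
      IsStarNormal N ∧
      ∀ etil : ℕ → l2 (Option ℤ),
        (etil 0 = ((Real.sqrt (1 - ϑ ^ 2) : ℝ) : ℂ) • evec (none : Option ℤ) +
            (ϑ : ℂ) • evec (some (0 : ℤ))) →
        (∀ n : ℕ, 1 ≤ n → etil n = evec (some (n : ℤ))) →
        Orthonormal ℂ etil ∧
        (∀ x ∈ (Submodule.span ℂ (Set.range etil)).topologicalClosure,
          N x ∈ (Submodule.span ℂ (Set.range etil)).topologicalClosure) ∧
        N (etil 0) = (ϑ : ℂ) • etil 1 ∧
        (∀ n : ℕ, 1 ≤ n → N (etil n) = etil (n + 1)) ∧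
        ∃ Wu : (Submodule.span ℂ (Set.range etil)).topologicalClosure ≃ₗᵢ[ℂ] l2 ℕ,
          ∀ (x : (Submodule.span ℂ (Set.range etil)).topologicalClosure)
            (hx : N (x : l2 (Option ℤ)) ∈
              (Submodule.span ℂ (Set.range etil)).topologicalClosure),
            (Wu ⟨N (x : l2 (Option ℤ)), hx⟩ : ℕ → ℂ) 0 = 0 ∧
            ∀ n : ℕ, (Wu ⟨N (x : l2 (Option ℤ)), hx⟩ : ℕ → ℂ) (n + 1) =
              (if n = 0 then (ϑ : ℂ) else 1) * (Wu x : ℕ → ℂ) n := by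
  have hlam : lamMap That lamHat = optionCompFun (Equiv.subRight 1) :=
    lamMap_eq_optionCompFun _ (fun m => (hE _ _).2 (.inr ⟨m - 1, rfl, by simp⟩)) hω h1
  set N := optionComp (Equiv.subRight (1 : ℤ))
  refine ⟨Submodule.eq_top_iff'.2 fun f => ?_, N, fun g => lp.ext (congrFun hlam g).symm,
    isStarNormal_optionComp _, fun etil h0 hn => ?_⟩
  · change Memℓp (lamMap That lamHat f) 2
    exact hlam ▸ memℓp_optionCompFun _ f.2
  have horth : Orthonormal ℂ etil := by
    refine orthonormal_of_eq_smul_evec_add_smul_evec ?_ h0 hn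
    simp [Real.sq_sqrt (by nlinarith [hϑ.1, hϑ.2] : 0 ≤ 1 - ϑ ^ 2)]
  have hN0 : N (etil 0) = (ϑ : ℂ) • etil 1 := by
    rw [h0, map_add, map_smul, map_smul, optionComp_evec_none, optionComp_evec_some, smul_zero,
      zero_add, hn 1 le_rfl]
    simp
  have hNn : ∀ n : ℕ, 1 ≤ n → N (etil n) = etil (n + 1) := fun n hn1 => by
    simp [N, hn n hn1, hn (n + 1) (by omega), optionComp_evec_some]
  obtain ⟨hinv, U, hU⟩ := horth.exists_linearIsometryEquiv_weightedShift
    (A := N) (w := fun n => if n = 0 then (ϑ : ℂ) else 1) fun n => by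
      cases n with
      | zero => simpa using hN0
      | succ n => simpa using hNn (n + 1) (by omega)
  exact ⟨horth, hinv, hN0, hNn, U, hU⟩
end
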